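/- Let α = [0; a₁, a₂, …] ∈ (0,1) be irrational with convergents pₙ/qₙ and θₙ = qₙα − pₙ. Then every β ∈ (−α, 1−α) has a unique representation β = Σ_{k=0}^∞ d_k θ_k where the integer digits satisfy 0 ≤ d₀ < a₁, 0 ≤ d_k ≤ a_{k+1} for k ≥ 1, d_k = a_{k+1} implies d_{k−1} = 0 for k ≥ 1, and d_{2i} ≠ a_{2i+1} for infinitely many i. -/

import Mathlib

open Filter Topology

noncomputable section

/-- The circle group `𝕋 = ℝ/ℤ`. -/
abbrev Circle1 : Type := AddCircle (1 : ℝ)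

/-- A set of naturals has natural density zero. -/
def DensityZero (A : Set ℕ) : Prop :=
  Tendsto (fun n : ℕ => ((A ∩ Set.Icc 1 n).ncard : ℝ) / n) atTop (𝓝 0)

/-- Statistical convergence to `0` of a sequence in the circle. -/
def StatTendstoZero (x : ℕ → Circle1) : Prop :=
  ∀ ε : ℝ, 0 < ε → DensityZero {n : ℕ | ε ≤ ‖x n‖}

/-- The characterized subgroup `t_(a_n)(𝕋)`. -/
def charSet (a : ℕ → ℤ) : Set Circle1 :=
  {x : Circle1 | Tendsto (fun n : ℕ => a n • x) atTop (𝓝 0)}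

/-- The statistically characterized subgroup `t^s_(a_n)(𝕋)`. -/
def statCharSet (a : ℕ → ℤ) : Set Circle1 :=
  {x : Circle1 | StatTendstoZero (fun n : ℕ => a n • x)}

namespace CF

/-- Gauss-map orbit of `α`: `G α 0 = α`, `G α (n+1) = {1 / G α n}`. -/
def G (α : ℝ) : ℕ → ℝ
  | 0 => α
  | n + 1 => Int.fract (G α n)⁻¹

/-- The partial quotients of the regular continued fraction `α = [0; a 1, a 2, …]`
(with the convention `a 0 = 0`). -/
def a (α : ℝ) : ℕ → ℕ
  | 0 => 0
  | n + 1 => ⌊(G α n)⁻¹⌋₊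

/-- Denominators of the convergents of the continued fraction of `α`. -/
def q (α : ℝ) : ℕ → ℕ
  | 0 => 1
  | 1 => a α 1
  | (n + 2) => a α (n + 2) * q α (n + 1) + q α n

/-- Numerators of the convergents of the continued fraction of `α`. -/
def p (α : ℝ) : ℕ → ℕ
  | 0 => 0
  | 1 => 1
  | (n + 2) => a α (n + 2) * p α (n + 1) + p α n

/-- `θ n = q n * α - p n`. -/
def θ (α : ℝ) (n : ℕ) : ℝ := (q α n : ℝ) * α - (p α n : ℝ)

end CF

open CF

/-!
Put `T n = G₀ G₁ ⋯ G_{n-1}` for the Gauss orbit `Gₖ` of `α`, so that `θ n = (-1)ⁿ T (n+1)` and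
`T n = a (n+1) T (n+1) + T (n+2)`. For digits `0 ≤ d k ≤ a (k+1)` the signed tails
`r n = (-1)ⁿ ∑_{k ≥ n} d k θ k` satisfy `r n = d n T (n+1) - r (n+1)` and `-T (n+1) ≤ r n ≤ T n`;
the upper endpoint is attained only if `d` is maximal at `n, n+2, n+4, …`, and the lower one
only if it is maximal at `n+1, n+3, …`. Hence the conditions on the digits force
`r n ∈ [-T (n+1), T n)` for even `n`, `r n ∈ (-T (n+1), T n]` for odd `n`, and that `r (n+1)` stays
below `T (n+1) - T (n+2)` once `d n ≥ 1`. These constraints determine `d n` from `r n` as the least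
digit pushing `r (n+1)` above `-T (n+2)`. So a valid representation of `β` is the output of a
greedy algorithm started at `r 0 = β` (uniqueness), and the output of that algorithm is a valid
representation of `β` because its remainders tend to `0` (existence).
-/

namespace CF

variable {α : ℝ}

theorem irrational_G (hirr : Irrational α) : ∀ n, Irrational (G α n)
  | 0 => hirr
  | n + 1 => by
    simpa only [G, Int.fract] using (irrational_G hirr n).inv.sub_intCast _

theorem G_mem_Ioo (hα : α ∈ Set.Ioo 0 1) (hirr : Irrational α) : ∀ n, G α n ∈ Set.Ioo 0 1
  | 0 => hα
  | n + 1 => by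
    refine ⟨(Int.fract_nonneg _).lt_of_ne fun h => ?_, Int.fract_lt_one _⟩
    exact (irrational_G hirr (n + 1)).ne_nat 0 (by simp [G, ← h])

theorem inv_G_eq_a_add_G {n : ℕ} (h : 0 ≤ G α n) : (G α n)⁻¹ = a α (n + 1) + G α (n + 1) := by
  rw [a, G, ← Int.cast_natCast, Int.natCast_floor_eq_floor (inv_nonneg.2 h), Int.floor_add_fract]

theorem one_le_a {n : ℕ} (h : G α n ∈ Set.Ioo 0 1) : 1 ≤ a α (n + 1) :=
  Nat.one_le_floor_iff _ |>.2 <| (one_le_inv₀ h.1).2 h.2.le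

theorem θ_add_two (n : ℕ) : θ α (n + 2) = a α (n + 2) * θ α (n + 1) + θ α n := by
  simp only [θ, q, p]
  push_cast
  ring

def T (α : ℝ) (n : ℕ) : ℝ := ∏ i ∈ Finset.range n, G α i

@[simp]
theorem T_zero : T α 0 = 1 := rfl

@[simp]
theorem T_one : T α 1 = α := by simp [T, G]

theorem T_succ (n : ℕ) : T α (n + 1) = T α n * G α n :=
  Finset.prod_range_succ _ _

section GaussOrbit

variable (hG : ∀ n, G α n ∈ Set.Ioo 0 1)
include hG

theorem T_pos (n : ℕ) : 0 < T α n :=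
  Finset.prod_pos fun i _ => (hG i).1

theorem T_succ_lt (n : ℕ) : T α (n + 1) < T α n := by
  rw [T_succ]
  exact mul_lt_of_lt_one_right (T_pos hG n) (hG n).2

theorem T_eq_a_mul_add_T (n : ℕ) : T α n = a α (n + 1) * T α (n + 1) + T α (n + 2) := by
  have h := inv_G_eq_a_add_G (hG n).1.le
  field_simp [(hG n).1.ne'] at h
  simp only [T_succ]
  linear_combination T α n * h

theorem a_mul_T_eq_sub (n : ℕ) : a α (n + 1) * T α (n + 1) = T α n - T α (n + 2) := by
  rw [T_eq_a_mul_add_T hG n]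
  ring

theorem θ_eq_neg_one_pow_mul_T : ∀ n, θ α n = (-1) ^ n * T α (n + 1) := by
  refine Nat.twoStepInduction ?_ ?_ fun n ih₀ ih₁ => ?_
  · simp [θ, q, p]
  · have h : α * (a α 1 + G α 1) = 1 := by
      rw [← inv_G_eq_a_add_G (hG 0).1.le]
      exact mul_inv_cancel₀ (hG 0).1.ne'
    simp only [θ, q, p, T_succ 1, T_one]
    linear_combination h
  · rw [θ_add_two, ih₀, ih₁, T_eq_a_mul_add_T hG (n + 1)]
    ring

theorem summable_T_sub_T : Summable fun n => T α n - T α (n + 2) := by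
  refine summable_of_sum_range_le (c := T α 0 + T α 1)
    (fun n => sub_nonneg.2 ((T_succ_lt hG _).trans (T_succ_lt hG n)).le) fun n => ?_
  calc ∑ k ∈ Finset.range n, (T α k - T α (k + 2))
      = ∑ k ∈ Finset.range n, ((T α k + T α (k + 1)) - (T α (k + 1) + T α (k + 1 + 1))) :=
        Finset.sum_congr rfl fun k _ => by ring
    _ = T α 0 + T α 1 - (T α n + T α (n + 1)) :=
        Finset.sum_range_sub' (fun k => T α k + T α (k + 1)) n
    _ ≤ T α 0 + T α 1 := sub_le_self _ (add_pos (T_pos hG n) (T_pos hG _)).le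

theorem tendsto_T_zero : Tendsto (T α) atTop (𝓝 0) := by
  refine (tendsto_add_atTop_iff_nat 1).1 (Summable.tendsto_atTop_zero ?_)
  refine (summable_T_sub_T hG).of_nonneg_of_le (fun n => (T_pos hG _).le) fun n => ?_
  rw [← a_mul_T_eq_sub hG]
  exact le_mul_of_one_le_left (T_pos hG _).le (by exact_mod_cast one_le_a (hG n))

theorem summable_digits_mul_θ {d : ℕ → ℕ} (hd : ∀ k, d k ≤ a α (k + 1)) :
    Summable fun k => (d k : ℝ) * θ α k := by
  refine (summable_T_sub_T hG).of_norm_bounded fun k => ?_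
  rw [θ_eq_neg_one_pow_mul_T hG, norm_mul, norm_mul, norm_pow, norm_neg, norm_one, one_pow,
    one_mul, Real.norm_natCast, Real.norm_of_nonneg (T_pos hG _).le, ← a_mul_T_eq_sub hG]
  exact mul_le_mul_of_nonneg_right (by exact_mod_cast hd k) (T_pos hG _).le

end GaussOrbit

end CF

namespace Ostrowski

def LtOrLe (n : ℕ) (x y : ℝ) : Prop := if Even n then x < y else x ≤ y

section LtOrLe

variable {n : ℕ} {x y x' y' : ℝ}

theorem ltOrLe_iff : LtOrLe n x y ↔ x ≤ y ∧ (Even n → x ≠ y) := by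
  unfold LtOrLe
  split_ifs with h <;> simp [h, lt_iff_le_and_ne]

theorem ltOrLe_succ_iff : LtOrLe (n + 1) x y ↔ ¬LtOrLe n y x := by
  unfold LtOrLe
  split_ifs with h h' h' <;> simp_all [Nat.even_add_one]

theorem ltOrLe_add_two : LtOrLe (n + 2) x y ↔ LtOrLe n x y := by
  simp [LtOrLe, Nat.even_add_one]

theorem ltOrLe_of_lt (h : x < y) : LtOrLe n x y := by
  unfold LtOrLe
  split_ifs
  exacts [h, h.le]

theorem LtOrLe.le (h : LtOrLe n x y) : x ≤ y :=
  (ltOrLe_iff.1 h).1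

theorem LtOrLe.of_sub_le_sub (h : LtOrLe n x y) (h' : y - x ≤ y' - x') : LtOrLe n x' y' := by
  unfold LtOrLe at *
  split_ifs at * <;> linarith

end LtOrLe

-- `[-T (n+1), T n)` for even `n` and `(-T (n+1), T n]` for odd `n`
def remInterval (α : ℝ) (n : ℕ) : Set ℝ :=
  {r | LtOrLe (n + 1) (-T α (n + 1)) r ∧ LtOrLe n r (T α n)}

def greedyDigit (α : ℝ) (n : ℕ) (r : ℝ) : ℕ :=
  sInf {k : ℕ | LtOrLe n (-T α (n + 2)) (k * T α (n + 1) - r)}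

def greedyRem (α β : ℝ) : ℕ → ℝ
  | 0 => β
  | n + 1 => greedyDigit α n (greedyRem α β n) * T α (n + 1) - greedyRem α β n

def greedyDigits (α β : ℝ) (n : ℕ) : ℕ := greedyDigit α n (greedyRem α β n)

theorem greedyRem_succ (α β : ℝ) (n : ℕ) :
    greedyRem α β (n + 1) = greedyDigits α β n * T α (n + 1) - greedyRem α β n :=
  rfl

section Greedy

variable {α : ℝ} (hG : ∀ n, G α n ∈ Set.Ioo 0 1)
include hG

theorem greedyDigit_eq_iff {n : ℕ} {r : ℝ} {k : ℕ} :
    greedyDigit α n r = k ↔ LtOrLe n (-T α (n + 2)) (k * T α (n + 1) - r) ∧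
      (1 ≤ k → LtOrLe (n + 1) (k * T α (n + 1) - r) (T α (n + 1) - T α (n + 2))) := by
  set S := {k : ℕ | LtOrLe n (-T α (n + 2)) (k * T α (n + 1) - r)}
  have hT := T_pos hG (n + 1)
  have hS : ∀ k₁ k₂, k₁ ≤ k₂ → k₁ ∈ S → k₂ ∈ S := fun k₁ k₂ hk h₁ =>
    LtOrLe.of_sub_le_sub h₁ (by gcongr)
  have hne : S.Nonempty := by
    obtain ⟨k, hk⟩ := exists_nat_gt (r / T α (n + 1))
    refine ⟨k, ltOrLe_of_lt ?_⟩
    rw [div_lt_iff₀ hT] at hk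
    linarith [T_pos hG (n + 2)]
  rcases k with _ | k
  · simp [greedyDigit, Nat.sInf_eq_zero, hne.ne_empty, S]
  · rw [greedyDigit, Nat.sInf_upward_closed_eq_succ_iff hS]
    simp only [Set.mem_ofPred_eq, S, ← ltOrLe_succ_iff, le_add_iff_nonneg_left, zero_le,
      true_imp_iff]
    refine and_congr_right fun _ => ⟨fun h => h.of_sub_le_sub ?_, fun h => h.of_sub_le_sub ?_⟩ <;>
      push_cast <;> linarith

theorem greedyDigit_le_a {n : ℕ} {r : ℝ} (hr : LtOrLe n r (T α n)) :
    greedyDigit α n r ≤ a α (n + 1) :=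
  Nat.sInf_le <| hr.of_sub_le_sub (by rw [T_eq_a_mul_add_T hG n]; linarith)

theorem greedyDigit_lt_a {n : ℕ} {r : ℝ} (hr : LtOrLe n r (T α n - T α (n + 1))) :
    greedyDigit α n r < a α (n + 1) := by
  obtain ⟨k, hk⟩ := Nat.exists_eq_add_of_le' (one_le_a (hG n))
  rw [hk, Nat.lt_succ_iff]
  refine Nat.sInf_le <| hr.of_sub_le_sub ?_
  rw [T_eq_a_mul_add_T hG n, hk]
  push_cast
  linarith

theorem greedyDigit_mul_T_sub_mem {n : ℕ} {r : ℝ} (hr : r ∈ remInterval α n) :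
    greedyDigit α n r * T α (n + 1) - r ∈ remInterval α (n + 1) := by
  obtain ⟨hmem, hcarry⟩ := (greedyDigit_eq_iff hG).1 rfl
  refine ⟨ltOrLe_add_two.2 hmem, ?_⟩
  rcases Nat.eq_zero_or_pos (greedyDigit α n r) with h0 | hpos
  · exact hr.1.of_sub_le_sub (by simp [h0, add_comm])
  · exact (hcarry hpos).of_sub_le_sub (by linarith [T_pos hG (n + 2)])

theorem greedyDigits_succ_lt {β : ℝ} {n : ℕ} (h : 1 ≤ greedyDigits α β n) :
    greedyDigits α β (n + 1) < a α (n + 2) :=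
  greedyDigit_lt_a hG ((greedyDigit_eq_iff hG).1 rfl |>.2 h)

theorem sum_range_greedyDigits_mul_θ (β : ℝ) (n : ℕ) :
    ∑ k ∈ Finset.range n, (greedyDigits α β k : ℝ) * θ α k = β - (-1) ^ n * greedyRem α β n := by
  induction n with
  | zero => simp [greedyRem]
  | succ n ih =>
    rw [Finset.sum_range_succ, ih, θ_eq_neg_one_pow_mul_T hG, greedyRem_succ]
    ring

variable {β : ℝ} (hβ : β ∈ remInterval α 0)
include hβ

theorem greedyRem_mem : ∀ n, greedyRem α β n ∈ remInterval α n
  | 0 => hβ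
  | n + 1 => greedyDigit_mul_T_sub_mem hG (greedyRem_mem n)

theorem greedyDigits_le_a (n : ℕ) : greedyDigits α β n ≤ a α (n + 1) :=
  greedyDigit_le_a hG (greedyRem_mem hG hβ n).2

theorem abs_greedyRem_le (n : ℕ) : |greedyRem α β n| ≤ T α n := by
  obtain ⟨h₁, h₂⟩ := greedyRem_mem hG hβ n
  exact abs_le.2 ⟨by linarith [h₁.le, T_succ_lt hG n], h₂.le⟩

theorem hasSum_greedyDigits_mul_θ : HasSum (fun k => (greedyDigits α β k : ℝ) * θ α k) β := by
  have hrem : Tendsto (fun n => (-1) ^ n * greedyRem α β n) atTop (𝓝 0) := by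
    refine squeeze_zero_norm (fun n => ?_) (tendsto_T_zero hG)
    simpa using abs_greedyRem_le hG hβ n
  rw [(summable_digits_mul_θ hG (greedyDigits_le_a hG hβ)).hasSum_iff_tendsto_nat]
  simpa [sum_range_greedyDigits_mul_θ hG] using tendsto_const_nhds.sub hrem

theorem exists_greedyDigits_ne_a (N : ℕ) :
    ∃ i, N ≤ i ∧ greedyDigits α β (2 * i) ≠ a α (2 * i + 1) := by
  by_contra! hmax
  -- maximal even digits force zero odd digits, so `T (2i) - r (2i) > 0` is eventually constant
  set c := fun i => T α (2 * i) - greedyRem α β (2 * i)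
  have hstep : ∀ i, N ≤ i → c (i + 1) = c i := by
    intro i hi
    have hzero : greedyDigits α β (2 * i + 1) = 0 := by
      by_contra h
      exact (greedyDigits_succ_lt hG (Nat.one_le_iff_ne_zero.2 h)).ne (hmax (i + 1) (by omega))
    have hT := T_eq_a_mul_add_T hG (2 * i)
    have hd : (greedyDigits α β (2 * i) : ℝ) = a α (2 * i + 1) := by exact_mod_cast hmax i hi
    simp only [c, mul_add, mul_one, greedyRem_succ, hzero, hd]
    push_cast
    linarith
  have hconst : ∀ j, c (j + N) = c N := by
    intro j
    induction j with
    | zero => simp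
    | succ j ih => rw [add_right_comm, hstep _ (by omega), ih]
  have hlim : Tendsto c atTop (𝓝 0) := by
    have hrem : Tendsto (greedyRem α β) atTop (𝓝 0) :=
      squeeze_zero_norm (abs_greedyRem_le hG hβ) (tendsto_T_zero hG)
    have h2 : Tendsto (fun i : ℕ => 2 * i) atTop atTop :=
      tendsto_id.const_mul_atTop' two_pos
    simpa using ((tendsto_T_zero hG).comp h2).sub (hrem.comp h2)
  have hpos : 0 < c N := by
    obtain ⟨hle, hne⟩ := ltOrLe_iff.1 (greedyRem_mem hG hβ (2 * N)).2
    exact sub_pos.2 (hle.lt_of_ne (hne (even_two_mul N)))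
  have hzero : c N = 0 :=
    tendsto_nhds_unique (tendsto_const_nhds.congr fun j => (hconst j).symm)
      (hlim.comp (tendsto_add_atTop_nat N))
  exact hpos.ne' hzero

end Greedy

def tail (α : ℝ) (d : ℕ → ℕ) (n : ℕ) : ℝ :=
  (-1) ^ n * ∑' k, (d (k + n) : ℝ) * θ α (k + n)

theorem tendsto_tail (α : ℝ) (d : ℕ → ℕ) : Tendsto (tail α d) atTop (𝓝 0) := by
  rw [tendsto_zero_iff_norm_tendsto_zero]
  simpa [tail] using (tendsto_sum_nat_add fun k => (d k : ℝ) * θ α k).norm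

section Tail

variable {α : ℝ} (hG : ∀ n, G α n ∈ Set.Ioo 0 1) {d : ℕ → ℕ} (hd : ∀ k, d k ≤ a α (k + 1))
include hG hd

theorem tail_eq_sub (n : ℕ) : tail α d n = d n * T α (n + 1) - tail α d (n + 1) := by
  have hs := (summable_nat_add_iff n).2 (summable_digits_mul_θ hG hd)
  have hsq : ((-1 : ℝ) ^ n) * (-1) ^ n = 1 := by rw [← mul_pow]; norm_num
  rw [tail, hs.tsum_eq_zero_add, tail, θ_eq_neg_one_pow_mul_T hG]
  simp only [zero_add, add_right_comm _ 1 n, ← add_assoc]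
  linear_combination (d n * T α (n + 1)) * hsq

theorem tail_le_T (n : ℕ) : tail α d n ≤ T α n := by
  set c := fun m => tail α d (n + 2 * m) - T α (n + 2 * m)
  have hmono : Monotone c := monotone_nat_of_le_succ fun m => by
    have h₁ := tail_eq_sub hG hd (n + 2 * m)
    have h₂ := tail_eq_sub hG hd (n + 2 * m + 1)
    have hT := T_eq_a_mul_add_T hG (n + 2 * m)
    have hda : (d (n + 2 * m) : ℝ) * T α (n + 2 * m + 1) ≤
        a α (n + 2 * m + 1) * T α (n + 2 * m + 1) :=
      mul_le_mul_of_nonneg_right (by exact_mod_cast hd _) (T_pos hG _).le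
    have hd₀ : 0 ≤ (d (n + 2 * m + 1) : ℝ) * T α (n + 2 * m + 2) :=
      mul_nonneg (Nat.cast_nonneg _) (T_pos hG _).le
    simp only [c, show n + 2 * (m + 1) = n + 2 * m + 2 by ring]
    linarith
  have hlim : Tendsto c atTop (𝓝 0) := by
    have h : Tendsto (fun m : ℕ => n + 2 * m) atTop atTop :=
      tendsto_atTop_atTop.2 fun b => ⟨b, fun m hm => by omega⟩
    simpa [c, Function.comp_def] using ((tendsto_tail α d).sub (tendsto_T_zero hG)).comp h
  simpa [c] using hmono.ge_of_tendsto hlim 0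

theorem neg_T_le_tail (n : ℕ) : -T α (n + 1) ≤ tail α d n := by
  have := mul_nonneg (Nat.cast_nonneg (d n)) (T_pos hG (n + 1)).le
  linarith [tail_eq_sub hG hd n, tail_le_T hG hd (n + 1)]

theorem eq_a_and_tail_succ_eq_of_tail_eq_T {n : ℕ} (h : tail α d n = T α n) :
    d n = a α (n + 1) ∧ tail α d (n + 1) = -T α (n + 2) := by
  have h₁ := tail_eq_sub hG hd n
  have hT := T_eq_a_mul_add_T hG n
  have hle : (a α (n + 1) : ℝ) * T α (n + 1) ≤ d n * T α (n + 1) := by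
    linarith [neg_T_le_tail hG hd (n + 1)]
  have hda : d n = a α (n + 1) :=
    le_antisymm (hd n) (by exact_mod_cast le_of_mul_le_mul_right hle (T_pos hG _))
  refine ⟨hda, ?_⟩
  rw [hda] at h₁
  linarith

theorem tail_succ_eq_of_tail_eq_neg_T {n : ℕ} (h : tail α d n = -T α (n + 1)) :
    tail α d (n + 1) = T α (n + 1) := by
  have := mul_nonneg (Nat.cast_nonneg (d n)) (T_pos hG (n + 1)).le
  linarith [tail_eq_sub hG hd n, tail_le_T hG hd (n + 1)]

theorem eq_a_of_tail_eq_T {m : ℕ} (h : tail α d m = T α m) (j : ℕ) :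
    d (m + 2 * j) = a α (m + 2 * j + 1) := by
  have htop : ∀ j, tail α d (m + 2 * j) = T α (m + 2 * j) := by
    intro j
    induction j with
    | zero => exact h
    | succ j ih =>
      exact tail_succ_eq_of_tail_eq_neg_T hG hd (eq_a_and_tail_succ_eq_of_tail_eq_T hG hd ih).2
  exact (eq_a_and_tail_succ_eq_of_tail_eq_T hG hd (htop j)).1

theorem tail_ltOrLe_of_lt_a {m : ℕ} (hlt : d m < a α (m + 1))
    (hmem : tail α d (m + 1) ∈ remInterval α (m + 1)) :
    LtOrLe m (tail α d m) (T α m - T α (m + 1)) := by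
  have hda : (d m : ℝ) + 1 ≤ a α (m + 1) := by exact_mod_cast hlt
  have := mul_le_mul_of_nonneg_right hda (T_pos hG (m + 1)).le
  refine (ltOrLe_add_two.1 hmem.1).of_sub_le_sub ?_
  linarith [tail_eq_sub hG hd m, T_eq_a_mul_add_T hG m]

end Tail

def IsOstrowskiDigits (α : ℝ) (d : ℕ → ℕ) : Prop :=
  d 0 < a α 1 ∧
  (∀ k, 1 ≤ k → d k ≤ a α (k + 1)) ∧
  (∀ k, 1 ≤ k → d k = a α (k + 1) → d (k - 1) = 0) ∧
  (∀ N : ℕ, ∃ i : ℕ, N ≤ i ∧ d (2 * i) ≠ a α (2 * i + 1))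

namespace IsOstrowskiDigits

variable {α : ℝ} {d : ℕ → ℕ} (hv : IsOstrowskiDigits α d)
include hv

theorem le_a : ∀ k, d k ≤ a α (k + 1)
  | 0 => hv.1.le
  | k + 1 => hv.2.1 (k + 1) k.succ_pos

variable (hG : ∀ n, G α n ∈ Set.Ioo 0 1)
include hG

theorem tail_ne_T {m : ℕ} (hm : Even m) : tail α d m ≠ T α m := by
  intro h
  obtain ⟨l, rfl⟩ := hm
  obtain ⟨i, hi, hne⟩ := hv.2.2.2 l
  have := eq_a_of_tail_eq_T hG hv.le_a h (i - l)
  rw [show l + l + 2 * (i - l) = 2 * i by omega] at this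
  exact hne this

theorem tail_mem (n : ℕ) : tail α d n ∈ remInterval α n := by
  refine ⟨ltOrLe_iff.2 ⟨neg_T_le_tail hG hv.le_a n, fun he h => ?_⟩,
    ltOrLe_iff.2 ⟨tail_le_T hG hv.le_a n, fun he => hv.tail_ne_T hG he⟩⟩
  exact hv.tail_ne_T hG he (tail_succ_eq_of_tail_eq_neg_T hG hv.le_a h.symm)

theorem eq_greedyDigit_tail (n : ℕ) : d n = greedyDigit α n (tail α d n) := by
  have hsucc : (d n : ℝ) * T α (n + 1) - tail α d n = tail α d (n + 1) := by
    linarith [tail_eq_sub hG hv.le_a n]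
  refine ((greedyDigit_eq_iff hG).2 ⟨?_, fun hpos => ?_⟩).symm <;> rw [hsucc]
  · exact ltOrLe_add_two.1 (hv.tail_mem hG (n + 1)).1
  · refine tail_ltOrLe_of_lt_a hG hv.le_a ((hv.le_a (n + 1)).lt_of_ne fun hmax => ?_)
      (hv.tail_mem hG (n + 2))
    exact Nat.one_le_iff_ne_zero.1 hpos (hv.2.2.1 (n + 1) n.succ_pos hmax)

theorem eq_greedyDigits {β : ℝ} (hs : HasSum (fun k => (d k : ℝ) * θ α k) β) :
    d = greedyDigits α β := by
  have htail : ∀ n, tail α d n = greedyRem α β n := by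
    intro n
    induction n with
    | zero => simp [tail, greedyRem, hs.tsum_eq]
    | succ n ih =>
      rw [greedyRem_succ, greedyDigits, ← ih, ← hv.eq_greedyDigit_tail hG n]
      linarith [tail_eq_sub hG hv.le_a n]
  funext n
  rw [hv.eq_greedyDigit_tail hG n, htail n, greedyDigits]

end IsOstrowskiDigits

theorem isOstrowskiDigits_greedyDigits {α β : ℝ} (hG : ∀ n, G α n ∈ Set.Ioo 0 1)
    (hβ : β ∈ Set.Ioo (-α) (1 - α)) :
    IsOstrowskiDigits α (greedyDigits α β) ∧
      HasSum (fun k => (greedyDigits α β k : ℝ) * θ α k) β := by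
  have hα : 0 < α := (hG 0).1
  have hβ₀ : β ∈ remInterval α 0 := by
    simp only [remInterval, LtOrLe, Set.mem_ofPred_eq, zero_add, T_zero, T_one, Nat.not_even_one,
      Even.zero, if_true, if_false]
    constructor <;> linarith [hβ.1, hβ.2]
  refine ⟨⟨greedyDigit_lt_a hG ?_, fun k _ => greedyDigits_le_a hG hβ₀ k, fun k hk hmax => ?_,
    exists_greedyDigits_ne_a hG hβ₀⟩, hasSum_greedyDigits_mul_θ hG hβ₀⟩
  · simpa [LtOrLe, greedyRem] using hβ.2
  · obtain ⟨j, rfl⟩ := Nat.exists_eq_add_of_le' hk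
    by_contra h
    exact (greedyDigits_succ_lt hG (Nat.one_le_iff_ne_zero.2 h)).ne hmax

end Ostrowski

/-- **Proposition 1.6 (Ostrowski representation).** -/
theorem stmt_16 (α : ℝ) (hα : α ∈ Set.Ioo (0 : ℝ) 1) (hirr : Irrational α)
    (β : ℝ) (hβ : β ∈ Set.Ioo (-α) (1 - α)) :
    ∃! d : ℕ → ℕ,
      d 0 < a α 1 ∧
      (∀ k, 1 ≤ k → d k ≤ a α (k + 1)) ∧
      (∀ k, 1 ≤ k → d k = a α (k + 1) → d (k - 1) = 0) ∧
      (∀ N : ℕ, ∃ i : ℕ, N ≤ i ∧ d (2 * i) ≠ a α (2 * i + 1)) ∧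
      HasSum (fun k : ℕ => (d k : ℝ) * θ α k) β := by
  have hG := G_mem_Ioo hα hirr
  obtain ⟨⟨h₀, h₁, h₂, h₃⟩, hs⟩ := Ostrowski.isOstrowskiDigits_greedyDigits hG hβ
  exact ⟨_, ⟨h₀, h₁, h₂, h₃, hs⟩, fun d ⟨h₀, h₁, h₂, h₃, hs⟩ =>
    Ostrowski.IsOstrowskiDigits.eq_greedyDigits ⟨h₀, h₁, h₂, h₃⟩ hG hs⟩
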